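/- Let t be a closed Mockingbird term, let P(t) = {s : t ≼ s} ordered by ≼, and let m be the greatest element of P(t). Then: (i) the minimum possible length (number of covering steps) of a saturated chain in P(t) from t to m equals the total number of white nodes W occurring in the duplicative forest fr(t); (ii) the maximum possible number of elements of a saturated chain in P(t) from t to m equals ml(fr(t)). -/

import Mathlib

/-- Mockingbird terms: the constant `M`, variables `x i`, and applications. -/
inductive MTerm : Type
  | M : MTerm
  | var : ℕ → MTerm
  | app : MTerm → MTerm → MTerm
  deriving DecidableEq

/-- The one-step rewrite relation `⇒` on Mockingbird terms. -/
inductive Step : MTerm → MTerm → Prop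
  | mock (t : MTerm) : Step (MTerm.app MTerm.M t) (MTerm.app t t)
  | left {t1 t1' : MTerm} (t2 : MTerm) :
      Step t1 t1' → Step (MTerm.app t1 t2) (MTerm.app t1' t2)
  | right (t1 : MTerm) {t2 t2' : MTerm} :
      Step t2 t2' → Step (MTerm.app t1 t2) (MTerm.app t1 t2')

/-- `≼`, the reflexive-transitive closure of `⇒`. -/
def MLe : MTerm → MTerm → Prop := Relation.ReflTransGen Step

/-- `≡`, the reflexive-symmetric-transitive closure of `⇒`. -/
def MEquiv : MTerm → MTerm → Prop := Relation.EqvGen Step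

/-- Strict version of `≼`. -/
def MLt (s t : MTerm) : Prop := MLe s t ∧ s ≠ t

/-- Covering relation for `≼`. -/
def MCovBy (s t : MTerm) : Prop := MLt s t ∧ ∀ z, MLt s z → ¬ MLt z t

/-- Duplicative trees: white or black nodes with a list (forest) of children. -/
inductive DTree : Type
  | W : List DTree → DTree
  | B : List DTree → DTree

/-- The one-step relation `⋖` on duplicative forests. -/
inductive DStep : List DTree → List DTree → Prop
  | dup (g : List DTree) : DStep [DTree.W g] [DTree.B (g ++ g)]
  | white {g g' : List DTree} : DStep g g' → DStep [DTree.W g] [DTree.W g']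
  | black {g g' : List DTree} : DStep g g' → DStep [DTree.B g] [DTree.B g']
  | head {t t' : DTree} (f : List DTree) : DStep [t] [t'] → DStep (t :: f) (t' :: f)
  | tail (t : DTree) {f f' : List DTree} : DStep f f' → DStep (t :: f) (t :: f')

/-- `≪`, the reflexive-transitive closure of `⋖`. -/
def DLe : List DTree → List DTree → Prop := Relation.ReflTransGen DStep

/-- The map `fr` from Mockingbird terms to duplicative forests. -/
def fr : MTerm → List DTree
  | MTerm.M => []
  | MTerm.var _ => []
  | MTerm.app MTerm.M MTerm.M => [DTree.B []]
  | MTerm.app MTerm.M t' => [DTree.W (fr t')]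
  | MTerm.app t t' => [DTree.B (fr t ++ fr t')]

mutual
  /-- The pruning map on duplicative trees (returns a forest). -/
  def prT : DTree → List DTree
    | DTree.W g => [DTree.W (prF g)]
    | DTree.B g => prF g
  /-- The pruning map on duplicative forests. -/
  def prF : List DTree → List DTree
    | [] => []
    | t :: f => prT t ++ prF f
end

mutual
  /-- The statistic `mtStat` on duplicative trees. -/
  def mtStat : DTree → ℕ
    | DTree.W g => 2 * ml g
    | DTree.B g => ml g
  /-- Sum of `mtStat` over the trees of a forest. -/
  def mtsum : List DTree → ℕ
    | [] => 0
    | t :: f => mtStat t + mtsum f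
  /-- The statistic `ml` on duplicative forests: `1 - ℓ + Σ mtStat`. -/
  def ml : List DTree → ℕ
    | f => mtsum f + 1 - f.length
end

mutual
  /-- Number of white nodes in a duplicative tree. -/
  def whitesT : DTree → ℕ
    | DTree.W g => 1 + whitesF g
    | DTree.B g => whitesF g
  /-- Number of white nodes in a duplicative forest. -/
  def whitesF : List DTree → ℕ
    | [] => 0
    | t :: f => whitesT t + whitesF f
end

/-- Closed terms: no variables. -/
def MClosed : MTerm → Prop
  | MTerm.M => True
  | MTerm.var _ => False
  | MTerm.app a b => MClosed a ∧ MClosed b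

/-- Degree: number of applications. -/
def deg : MTerm → ℕ
  | MTerm.M => 0
  | MTerm.var _ => 0
  | MTerm.app a b => deg a + deg b + 1

/-- Subterm relation. -/
inductive Subterm : MTerm → MTerm → Prop
  | refl (t : MTerm) : Subterm t t
  | left {s a : MTerm} (b : MTerm) : Subterm s a → Subterm s (MTerm.app a b)
  | right (a : MTerm) {s b : MTerm} : Subterm s b → Subterm s (MTerm.app a b)

/-- The term `r_d`. -/
def rTerm : ℕ → MTerm
  | 0 => MTerm.M
  | d + 1 => MTerm.app MTerm.M (rTerm d)

/-- Saturated chain from `a` to `b`, given as the list of its elements. -/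
def SatChain (a b : MTerm) (c : List MTerm) : Prop :=
  List.Chain' MCovBy c ∧ c.head? = some a ∧ c.getLast? = some b

open MTerm

def IsApp : MTerm → Prop
  | app _ _ => True
  | _ => False

lemma isApp_app (a b : MTerm) : IsApp (app a b) := trivial

lemma isApp_ne_M {t : MTerm} (h : IsApp t) : t ≠ M := by
  cases t <;> simp_all [IsApp]

lemma step_closed {s t : MTerm} (h : Step s t) (hc : MClosed s) : MClosed t := by
  induction h with
  | mock t => exact ⟨hc.2, hc.2⟩
  | left t2 h ih => exact ⟨ih hc.1, hc.2⟩
  | right t1 h ih => exact ⟨hc.1, ih hc.2⟩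

lemma mle_closed {s t : MTerm} (h : MLe s t) (hc : MClosed s) : MClosed t := by
  induction h with
  | refl => exact hc
  | tail _ h ih => exact step_closed h ih

lemma step_tgt_isApp {s t : MTerm} (h : Step s t) : IsApp t := by
  cases h <;> trivial

lemma mle_isApp {s t : MTerm} (ha : IsApp s) (h : MLe s t) : IsApp t := by
  induction h with
  | refl => exact ha
  | tail _ h _ => exact step_tgt_isApp h

lemma no_step_M {u : MTerm} (h : Step M u) : False := by cases h

lemma mle_M {u : MTerm} (h : MLe M u) : u = M := by
  induction h with
  | refl => rfl
  | tail _ h ih => subst ih; exact absurd h no_step_M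

lemma step_app_decomp {v w u : MTerm} (hv : IsApp v) (h : Step (app v w) u) :
    ∃ v' w', u = app v' w' ∧ ((Step v v' ∧ w = w') ∨ (v = v' ∧ Step w w')) := by
  cases h with
  | mock => exact absurd hv (by simp [IsApp])
  | left t2 h => exact ⟨_, _, rfl, Or.inl ⟨h, rfl⟩⟩
  | right t1 h => exact ⟨_, _, rfl, Or.inr ⟨rfl, h⟩⟩

lemma mle_app_decomp {v w u : MTerm} (hv : IsApp v) (h : MLe (app v w) u) :
    ∃ v' w', u = app v' w' ∧ MLe v v' ∧ MLe w w' := by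
  induction h with
  | refl => exact ⟨v, w, rfl, .refl, .refl⟩
  | tail _ h ih =>
    obtain ⟨v', w', rfl, h1, h2⟩ := ih
    obtain ⟨v2, w2, heq, hcase⟩ := step_app_decomp (mle_isApp hv h1) h
    subst heq
    rcases hcase with ⟨hs, rfl⟩ | ⟨rfl, hs⟩
    · exact ⟨_, _, rfl, h1.tail hs, h2⟩
    · exact ⟨_, _, rfl, h1, h2.tail hs⟩

lemma mle_app_left {v v' : MTerm} (w : MTerm) (h : MLe v v') :
    MLe (app v w) (app v' w) :=
  Relation.ReflTransGen.lift (fun x => app x w) (fun _ _ h => Step.left w h) _ _ h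

lemma mle_app_right (v : MTerm) {w w' : MTerm} (h : MLe w w') :
    MLe (app v w) (app v w') :=
  Relation.ReflTransGen.lift (fun x => app v x) (fun _ _ h => Step.right v h) _ _ h

lemma mle_app_both {v v' w w' : MTerm} (h1 : MLe v v') (h2 : MLe w w') :
    MLe (app v w) (app v' w') :=
  (mle_app_left w h1).trans (mle_app_right v' h2)

lemma mle_Mapp_decomp {a u : MTerm} (ha : IsApp a) (h : MLe (app M a) u) :
    (∃ a', u = app M a' ∧ MLe a a') ∨
    (∃ v w, u = app v w ∧ IsApp v ∧ MLe a v ∧ MLe a w) := by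
  induction h with
  | refl => exact Or.inl ⟨a, rfl, .refl⟩
  | tail _ h ih =>
    rcases ih with ⟨a', rfl, h1⟩ | ⟨v, w, rfl, hv, h1, h2⟩
    · cases h with
      | mock => exact Or.inr ⟨a', a', rfl, mle_isApp ha h1, h1, h1⟩
      | left _ h => exact absurd h no_step_M
      | right _ h => exact Or.inl ⟨_, rfl, h1.tail h⟩
    · obtain ⟨v', w', rfl, hcase⟩ := step_app_decomp hv h
      rcases hcase with ⟨hs, rfl⟩ | ⟨rfl, hs⟩
      · exact Or.inr ⟨_, _, rfl, step_tgt_isApp hs, h1.tail hs, h2⟩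
      · exact Or.inr ⟨_, _, rfl, hv, h1, h2.tail hs⟩


lemma mle_MM {u : MTerm} (h : MLe (app M M) u) : u = app M M := by
  induction h with
  | refl => rfl
  | tail _ h ih =>
    subst ih
    cases h with
    | mock => rfl
    | left _ h => exact absurd h no_step_M
    | right _ h => exact absurd h no_step_M

lemma isApp_not_mle_M {a : MTerm} (ha : IsApp a) : ¬ MLe a M := fun h =>
  isApp_ne_M (mle_isApp ha h) rfl

lemma mle_antisymm {s u : MTerm} (hc : MClosed s) (h1 : MLe s u) (h2 : MLe u s) :
    s = u := by
  induction s generalizing u with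
  | M => exact (mle_M h1).symm
  | var i => exact absurd hc id
  | app s1 s2 ih1 ih2 =>
    match s1, hc with
    | M, hc =>
      match s2, hc with
      | M, _ => exact (mle_MM h1).symm
      | var i, hc => exact absurd hc.2 id
      | app a b, hc =>
        rcases mle_Mapp_decomp (isApp_app a b) h1 with ⟨a', rfl, ha⟩ | ⟨v, w, rfl, hv, _, _⟩
        · rcases mle_Mapp_decomp (mle_isApp (isApp_app a b) ha) h2 with
            ⟨a'', heq, ha'⟩ | ⟨v, w, heq, hv, _, _⟩
          · cases heq
            rw [ih2 hc.2 ha ha']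
          · cases heq
            exact absurd hv (by simp [IsApp])
        · obtain ⟨v', w', heq, hvM, _⟩ := mle_app_decomp hv h2
          cases heq
          exact absurd hvM (isApp_not_mle_M hv)
    | var i, hc => exact absurd hc.1 id
    | app a b, hc =>
      obtain ⟨v, w, rfl, hv1, hw1⟩ := mle_app_decomp (isApp_app a b) h1
      obtain ⟨v', w', heq, hv2, hw2⟩ := mle_app_decomp (mle_isApp (isApp_app a b) hv1) h2
      cases heq
      rw [ih1 hc.1 hv1 hv2, ih2 hc.2 hw1 hw2]

/-- `m` is the greatest element of `P(t)`. -/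
def Grt (t m : MTerm) : Prop := MLe t m ∧ ∀ s, MLe t s → MLe s m

lemma grt_unique {t m m' : MTerm} (hc : MClosed t) (h : Grt t m) (h' : Grt t m') :
    m = m' :=
  mle_antisymm (mle_closed h.1 hc) (h'.2 m h.1) (h.2 m' h'.1)

lemma grt_M {m : MTerm} (h : Grt M m) : m = M := mle_M h.1

lemma grt_MM {m : MTerm} (h : Grt (app M M) m) : m = app M M := mle_MM h.1

lemma grt_app {t1 t2 m : MTerm} (h1 : IsApp t1) (h : Grt (app t1 t2) m) :
    ∃ m1 m2, m = app m1 m2 ∧ Grt t1 m1 ∧ Grt t2 m2 := by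
  obtain ⟨m1, m2, rfl, hm1, hm2⟩ := mle_app_decomp h1 h.1
  refine ⟨m1, m2, rfl, ⟨hm1, fun s hs => ?_⟩, ⟨hm2, fun s hs => ?_⟩⟩
  · have := h.2 (app s t2) (mle_app_left t2 hs)
    obtain ⟨v, w, heq, hv, hw⟩ := mle_app_decomp (mle_isApp h1 hs) this
    cases heq; exact hv
  · have := h.2 (app t1 s) (mle_app_right t1 hs)
    obtain ⟨v, w, heq, hv, hw⟩ := mle_app_decomp h1 this
    cases heq; exact hw

lemma grt_Mapp {a m : MTerm} (ha : IsApp a) (hc : MClosed a) (h : Grt (app M a) m) :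
    ∃ b, m = app b b ∧ Grt a b := by
  have hdup : ∀ s, MLe a s → MLe (app M a) (app s s) := fun s hs =>
    ((mle_app_right M hs).tail (Step.mock s))
  rcases mle_Mapp_decomp ha h.1 with ⟨a', rfl, h1⟩ | ⟨v, w, rfl, hv, h1, h2⟩
  · have := h.2 (app a a) (hdup a .refl)
    obtain ⟨v', w', heq, hv', _⟩ := mle_app_decomp ha this
    cases heq
    exact absurd hv' (isApp_not_mle_M ha)
  · have key : ∀ s, MLe a s → MLe s v ∧ MLe s w := by
      intro s hs
      have := h.2 (app s s) (hdup s hs)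
      obtain ⟨v', w', heq, hsv, hsw⟩ := mle_app_decomp (mle_isApp ha hs) this
      cases heq; exact ⟨hsv, hsw⟩
    have gv : Grt a v := ⟨h1, fun s hs => (key s hs).1⟩
    have gw : Grt a w := ⟨h2, fun s hs => (key s hs).2⟩
    cases grt_unique hc gv gw
    exact ⟨v, rfl, gv⟩

lemma mlt_of_mle_ne {s t : MTerm} (h : MLe s t) (hne : s ≠ t) : MLt s t := ⟨h, hne⟩

lemma cov_left {v v' w : MTerm} (hv : IsApp v) (hcv : MClosed v) (hcw : MClosed w)
    (h : MCovBy v v') : MCovBy (app v w) (app v' w) := by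
  have hne : v ≠ v' := h.1.2
  refine ⟨⟨mle_app_left w h.1.1, by simp [hne]⟩, fun z hz1 hz2 => ?_⟩
  obtain ⟨z1, z2, rfl, hz1v, hz1w⟩ := mle_app_decomp hv hz1.1
  obtain ⟨z1', z2', heq, hz2v, hz2w⟩ := mle_app_decomp (mle_isApp hv hz1v) hz2.1
  cases heq
  have hz2w' : z2 = w := mle_antisymm (mle_closed hz1w hcw) hz2w hz1w
  subst hz2w'
  have h1 : v ≠ z1 := fun e => hz1.2 (by rw [e])
  have h2 : z1 ≠ v' := fun e => hz2.2 (by rw [e])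
  exact h.2 z1 ⟨hz1v, h1⟩ ⟨hz2v, h2⟩

lemma cov_right {v w w' : MTerm} (hv : IsApp v) (hcv : MClosed v)
    (h : MCovBy w w') : MCovBy (app v w) (app v w') := by
  have hne : w ≠ w' := h.1.2
  refine ⟨⟨mle_app_right v h.1.1, by simp [hne]⟩, fun z hz1 hz2 => ?_⟩
  obtain ⟨z1, z2, rfl, hz1v, hz1w⟩ := mle_app_decomp hv hz1.1
  obtain ⟨z1', z2', heq, hz2v, hz2w⟩ := mle_app_decomp (mle_isApp hv hz1v) hz2.1
  cases heq
  have hz1v' : z1 = v := mle_antisymm (mle_closed hz1v hcv) hz2v hz1v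
  subst hz1v'
  have h1 : w ≠ z2 := fun e => hz1.2 (by rw [e])
  have h2 : z2 ≠ w' := fun e => hz2.2 (by rw [e])
  exact h.2 z2 ⟨hz1w, h1⟩ ⟨hz2w, h2⟩

lemma cov_M {x y : MTerm} (hx : IsApp x) (h : MCovBy x y) :
    MCovBy (app M x) (app M y) := by
  have hne : x ≠ y := h.1.2
  refine ⟨⟨mle_app_right M h.1.1, by simp [hne]⟩, fun z hz1 hz2 => ?_⟩
  rcases mle_Mapp_decomp hx hz1.1 with ⟨x', rfl, hx1⟩ | ⟨v, w, rfl, hv, _, _⟩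
  · rcases mle_Mapp_decomp (mle_isApp hx hx1) hz2.1 with ⟨x'', heq, hx2⟩ | ⟨v, w, heq, hv, _, _⟩
    · injection heq with h3 h4
      subst h4
      have h1 : x ≠ x' := fun e => hz1.2 (by rw [e])
      have h2 : x' ≠ y := fun e => hz2.2 (by rw [e])
      exact h.2 x' ⟨hx1, h1⟩ ⟨hx2, h2⟩
    · cases heq; exact absurd hv (by simp [IsApp])
  · obtain ⟨v', w', heq, hvM, _⟩ := mle_app_decomp hv hz2.1
    cases heq
    exact absurd hvM (isApp_not_mle_M hv)

lemma cov_dup {x : MTerm} (hx : IsApp x) (hcx : MClosed x) :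
    MCovBy (app M x) (app x x) := by
  have hne : M ≠ x := fun e => isApp_ne_M hx e.symm
  refine ⟨⟨Relation.ReflTransGen.single (Step.mock x), by simp [hne]⟩, fun z hz1 hz2 => ?_⟩
  rcases mle_Mapp_decomp hx hz1.1 with ⟨x', rfl, hx1⟩ | ⟨v, w, rfl, hv, h1, h2⟩
  · rcases mle_Mapp_decomp (mle_isApp hx hx1) hz2.1 with ⟨x'', heq, _⟩ | ⟨v, w, heq, hv, hv1, _⟩
    · injection heq with h3 h4
      exact absurd h3 (isApp_ne_M hx)
    · cases heq
      have : x' = x := mle_antisymm (mle_closed hx1 hcx) hv1 hx1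
      exact hz1.2 (by rw [this])
  · obtain ⟨v', w', heq, hv1, hw1⟩ := mle_app_decomp hv hz2.1
    injection heq with h3 h4
    subst h3; subst h4
    have e1 : v = x := mle_antisymm (mle_closed h1 hcx) hv1 h1
    have e2 : w = x := mle_antisymm (mle_closed h2 hcx) hw1 h2
    exact hz2.2 (by rw [e1, e2])

lemma cov_app_decomp {v w u : MTerm} (hv : IsApp v) (hcv : MClosed v) (hcw : MClosed w)
    (h : MCovBy (app v w) u) :
    ∃ v' w', u = app v' w' ∧
      ((MCovBy v v' ∧ w = w') ∨ (v = v' ∧ MCovBy w w')) := by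
  obtain ⟨v', w', rfl, h1, h2⟩ := mle_app_decomp hv h.1.1
  refine ⟨v', w', rfl, ?_⟩
  by_cases e1 : v = v'
  · subst e1
    have e2 : w ≠ w' := fun e => h.1.2 (by rw [e])
    refine Or.inr ⟨rfl, ⟨h2, e2⟩, fun z hz1 hz2 => ?_⟩
    exact h.2 (app v z) ⟨mle_app_right v hz1.1, by simp [hz1.2]⟩
      ⟨mle_app_right v hz2.1, by simp [hz2.2]⟩
  · by_cases e2 : w = w'
    · subst e2
      refine Or.inl ⟨⟨⟨h1, e1⟩, fun z hz1 hz2 => ?_⟩, rfl⟩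
      exact h.2 (app z w) ⟨mle_app_left w hz1.1, by simp [hz1.2]⟩
        ⟨mle_app_left w hz2.1, by simp [hz2.2]⟩
    · exact absurd (h.2 (app v' w) ⟨mle_app_left w h1, by simp [e1]⟩
          ⟨mle_app_right v' h2, by simp [e2]⟩) not_false

lemma cov_Mapp_decomp {x u : MTerm} (hx : IsApp x) (hcx : MClosed x)
    (h : MCovBy (app M x) u) :
    (∃ y, u = app M y ∧ MCovBy x y) ∨ u = app x x := by
  rcases mle_Mapp_decomp hx h.1.1 with ⟨y, rfl, h1⟩ | ⟨v, w, rfl, hv, h1, h2⟩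
  · have e1 : x ≠ y := fun e => h.1.2 (by rw [e])
    refine Or.inl ⟨y, rfl, ⟨h1, e1⟩, fun z hz1 hz2 => ?_⟩
    exact h.2 (app M z) ⟨mle_app_right M hz1.1, by simp [hz1.2]⟩
      ⟨mle_app_right M hz2.1, by simp [hz2.2]⟩
  · right
    by_contra hne
    have hlt1 : MLt (app M x) (app x x) :=
      ⟨Relation.ReflTransGen.single (Step.mock x),
        by simpa using (fun e => isApp_ne_M hx e.symm : M ≠ x)⟩
    have hlt2 : MLt (app x x) (app v w) := ⟨mle_app_both h1 h2, fun e => hne e.symm⟩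
    exact h.2 (app x x) hlt1 hlt2

/-- paths of covers -/
inductive SatPath : MTerm → MTerm → ℕ → Prop
  | refl (a : MTerm) : SatPath a a 0
  | cons {a b c : MTerm} {n : ℕ} : MCovBy a b → SatPath b c n → SatPath a c (n + 1)

lemma satPath_trans {a b c : MTerm} {m n : ℕ} (h1 : SatPath a b m) (h2 : SatPath b c n) :
    SatPath a c (m + n) := by
  induction h1 with
  | refl => simpa using h2
  | @cons x y z k hc _ ih =>
    have := SatPath.cons hc (ih h2)
    have e : k + n + 1 = k + 1 + n := by omega
    rwa [e] at this

lemma satPath_mle {a b : MTerm} {n : ℕ} (h : SatPath a b n) : MLe a b := by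
  induction h with
  | refl => exact .refl
  | cons hc _ ih => exact hc.1.1.trans ih

lemma satPath_lift_left {v v' : MTerm} {n : ℕ} (w : MTerm) (hv : IsApp v)
    (hcv : MClosed v) (hcw : MClosed w) (h : SatPath v v' n) :
    SatPath (app v w) (app v' w) n := by
  induction h with
  | refl => exact .refl _
  | cons hc hp ih =>
    exact .cons (cov_left hv hcv hcw hc)
      (ih (mle_isApp hv hc.1.1) (mle_closed hc.1.1 hcv))

lemma satPath_lift_right {w w' : MTerm} {n : ℕ} (v : MTerm) (hv : IsApp v)
    (hcv : MClosed v) (h : SatPath w w' n) :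
    SatPath (app v w) (app v w') n := by
  induction h with
  | refl => exact .refl _
  | cons hc hp ih => exact .cons (cov_right hv hcv hc) ih

lemma satPath_lift_M {x y : MTerm} {n : ℕ} (hx : IsApp x) (h : SatPath x y n) :
    SatPath (app M x) (app M y) n := by
  induction h with
  | refl => exact .refl _
  | cons hc hp ih => exact .cons (cov_M hx hc) (ih (mle_isApp hx hc.1.1))

lemma satPath_app_decomp {n : ℕ} {v w u : MTerm} (hv : IsApp v) (hcv : MClosed v)
    (hcw : MClosed w) (h : SatPath (app v w) u n) :
    ∃ v' w' n1 n2, u = app v' w' ∧ n = n1 + n2 ∧ SatPath v v' n1 ∧ SatPath w w' n2 := by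
  induction n generalizing v w with
  | zero =>
    cases h
    exact ⟨v, w, 0, 0, rfl, rfl, .refl _, .refl _⟩
  | succ k ih =>
    cases h with
    | cons hc hp =>
      obtain ⟨v', w', rfl, hcase⟩ := cov_app_decomp hv hcv hcw hc
      rcases hcase with ⟨hcv', rfl⟩ | ⟨rfl, hcw'⟩
      · obtain ⟨v2, w2, n1, n2, rfl, hn, p1, p2⟩ :=
          ih (mle_isApp hv hcv'.1.1) (mle_closed hcv'.1.1 hcv) hcw hp
        exact ⟨v2, w2, n1 + 1, n2, rfl, by omega, .cons hcv' p1, p2⟩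
      · obtain ⟨v2, w2, n1, n2, rfl, hn, p1, p2⟩ :=
          ih hv hcv (mle_closed hcw'.1.1 hcw) hp
        exact ⟨v2, w2, n1, n2 + 1, rfl, by omega, p1, .cons hcw' p2⟩

lemma satPath_Mapp_decomp {n : ℕ} {x u : MTerm} (hx : IsApp x) (hcx : MClosed x)
    (h : SatPath (app M x) u n) :
    (∃ y, u = app M y ∧ SatPath x y n) ∨
    (∃ s n1 n2, n = n1 + 1 + n2 ∧ SatPath x s n1 ∧ SatPath (app s s) u n2) := by
  induction n generalizing x with
  | zero =>
    cases h
    exact Or.inl ⟨x, rfl, .refl _⟩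
  | succ k ih =>
    cases h with
    | cons hc hp =>
      rcases cov_Mapp_decomp hx hcx hc with ⟨y, rfl, hxy⟩ | rfl
      · rcases ih (mle_isApp hx hxy.1.1) (mle_closed hxy.1.1 hcx) hp with
          ⟨y', rfl, p⟩ | ⟨s, n1, n2, hn, p1, p2⟩
        · exact Or.inl ⟨y', rfl, .cons hxy p⟩
        · exact Or.inr ⟨s, n1 + 1, n2, by omega, .cons hxy p1, p2⟩
      · exact Or.inr ⟨x, 0, k, by omega, .refl _, hp⟩

lemma mle_reach {t s : MTerm} (hc : MClosed t) (h : MLe t s) : ∃ n, SatPath t s n := by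
  induction t generalizing s with
  | M => exact ⟨0, mle_M h ▸ .refl _⟩
  | var i => exact absurd hc id
  | app t1 t2 ih1 ih2 =>
    match t1, hc with
    | M, hc =>
      match t2, hc with
      | M, _ =>
        exact ⟨0, mle_MM h ▸ .refl _⟩
      | var i, hc => exact absurd hc.2 id
      | app a b, hc =>
        have hx : IsApp (app a b) := isApp_app a b
        rcases mle_Mapp_decomp hx h with ⟨y, rfl, h1⟩ | ⟨v, w, rfl, hv, h1, h2⟩
        · obtain ⟨n, p⟩ := ih2 hc.2 h1
          exact ⟨n, satPath_lift_M hx p⟩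
        · obtain ⟨n1, p1⟩ := ih2 hc.2 h1
          obtain ⟨n2, p2⟩ := ih2 hc.2 h2
          refine ⟨1 + (n1 + n2), ?_⟩
          refine satPath_trans (n := n1 + n2)
            (.cons (cov_dup hx hc.2) (.refl _)) ?_
          refine satPath_trans (satPath_lift_left _ hx hc.2 hc.2 p1) ?_
          exact satPath_lift_right v hv (mle_closed h1 hc.2) p2
    | var i, hc => exact absurd hc.1 id
    | app a b, hc =>
      have hx : IsApp (app a b) := isApp_app a b
      obtain ⟨v, w, rfl, h1, h2⟩ := mle_app_decomp hx h
      obtain ⟨n1, p1⟩ := ih1 hc.1 h1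
      obtain ⟨n2, p2⟩ := ih2 hc.2 h2
      refine ⟨n1 + n2, satPath_trans (satPath_lift_left _ hx hc.1 hc.2 p1) ?_⟩
      exact satPath_lift_right v (mle_isApp hx h1) (mle_closed h1 hc.1) p2

open MTerm DTree

lemma fr_M : fr M = [] := rfl
lemma fr_MM : fr (app M M) = [B []] := rfl
lemma fr_Mapp (a b : MTerm) : fr (app M (app a b)) = [W (fr (app a b))] := rfl
lemma fr_app (a b t' : MTerm) :
    fr (app (app a b) t') = [B (fr (app a b) ++ fr t')] := rfl

lemma whitesF_append (f g : List DTree) :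
    whitesF (f ++ g) = whitesF f + whitesF g := by
  induction f with
  | nil => simp [whitesF]
  | cons t f ih => simp [whitesF, ih]; omega

lemma mtsum_append (f g : List DTree) :
    mtsum (f ++ g) = mtsum f + mtsum g := by
  induction f with
  | nil => simp [mtsum]
  | cons t f ih => simp [mtsum, ih]; omega

mutual
  theorem mtStat_pos : ∀ t : DTree, 1 ≤ mtStat t
    | DTree.W g => by
      have := mtsum_ge g
      simp only [mtStat, ml]
      omega
    | DTree.B g => by
      have := mtsum_ge g
      simp only [mtStat, ml]
      omega
  theorem mtsum_ge : ∀ f : List DTree, f.length ≤ mtsum f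
    | [] => by simp [mtsum]
    | t :: f => by
      have h1 := mtStat_pos t
      have h2 := mtsum_ge f
      simp only [mtsum, List.length_cons]
      omega
end

lemma ml_def (f : List DTree) : ml f = mtsum f + 1 - f.length := by simp [ml]

lemma ml_pos (f : List DTree) : 1 ≤ ml f := by
  have := mtsum_ge f
  rw [ml_def]
  omega

lemma ml_nil : ml [] = 1 := by rw [ml_def]; simp [mtsum]

lemma ml_append (f g : List DTree) : ml (f ++ g) = ml f + ml g - 1 := by
  have h1 := mtsum_ge f
  have h2 := mtsum_ge g
  rw [ml_def, ml_def, ml_def, mtsum_append]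
  simp only [List.length_append]
  omega

lemma whitesF_fr_M : whitesF (fr M) = 0 := rfl
lemma whitesF_fr_MM : whitesF (fr (app M M)) = 0 := rfl
lemma whitesF_fr_Mapp (a b : MTerm) :
    whitesF (fr (app M (app a b))) = 1 + whitesF (fr (app a b)) := by
  rw [fr_Mapp]
  simp [whitesF, whitesT]

lemma whitesF_fr_app (a b t' : MTerm) :
    whitesF (fr (app (app a b) t')) = whitesF (fr (app a b)) + whitesF (fr t') := by
  rw [fr_app]
  simp [whitesF, whitesT, whitesF_append]

lemma ml_fr_M : ml (fr M) = 1 := by rw [fr_M]; exact ml_nil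
lemma ml_fr_MM : ml (fr (app M M)) = 1 := by
  rw [fr_MM, ml_def]
  simp [mtsum, mtStat, ml_nil]
lemma ml_fr_Mapp (a b : MTerm) :
    ml (fr (app M (app a b))) = 2 * ml (fr (app a b)) := by
  rw [fr_Mapp, ml_def]
  simp [mtsum, mtStat]

lemma ml_fr_app (a b t' : MTerm) :
    ml (fr (app (app a b) t')) = ml (fr (app a b)) + ml (fr t') - 1 := by
  rw [fr_app, ml_def]
  simp only [mtsum, mtStat, List.length_cons, List.length_nil]
  rw [ml_append]
  have := ml_pos (fr (app a b))
  have := ml_pos (fr t')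
  omega

lemma no_cov_M {b : MTerm} (h : MCovBy M b) : False :=
  h.1.2 (mle_M h.1.1).symm

lemma no_cov_MM {b : MTerm} (h : MCovBy (MTerm.app M M) b) : False :=
  h.1.2 (mle_MM h.1.1).symm

lemma satPath_zero {a u : MTerm} {n : ℕ} (hnc : ∀ b, ¬ MCovBy a b)
    (h : SatPath a u n) : n = 0 := by
  cases h with
  | refl => rfl
  | cons hc _ => exact absurd hc (hnc _)

theorem main_sat : ∀ (t m : MTerm), MClosed t → Grt t m →
    (SatPath t m (whitesF (fr t)) ∧ ∀ n, SatPath t m n → whitesF (fr t) ≤ n) ∧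
    (SatPath t m (ml (fr t) - 1) ∧ ∀ n, SatPath t m n → n + 1 ≤ ml (fr t)) := by
  intro t
  induction t with
  | M =>
    intro m _ hg
    cases grt_M hg
    rw [whitesF_fr_M, ml_fr_M]
    exact ⟨⟨.refl _, fun n _ => Nat.zero_le n⟩, .refl _,
      fun n hn => by rw [satPath_zero (fun b h => no_cov_M h) hn]⟩
  | var i => intro m hc; exact absurd hc id
  | app t1 t2 ih1 ih2 =>
    intro m hc hg
    match t1, hc, hg with
    | M, hc, hg =>
      match t2, hc, hg with
      | M, _, hg =>
        cases grt_MM hg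
        rw [whitesF_fr_MM, ml_fr_MM]
        exact ⟨⟨.refl _, fun n _ => Nat.zero_le n⟩, .refl _,
          fun n hn => by rw [satPath_zero (fun b h => no_cov_MM h) hn]⟩
      | var i, hc, _ => exact absurd hc.2 id
      | app a b, hc, hg =>
        have hx : IsApp (app a b) := isApp_app a b
        obtain ⟨bb, rfl, gbb⟩ := grt_Mapp hx hc.2 hg
        obtain ⟨⟨pmin, bmin⟩, pmax, bmax⟩ := ih2 bb hc.2 gbb
        have hbApp : IsApp bb := mle_isApp hx gbb.1
        have hbC : MClosed bb := mle_closed gbb.1 hc.2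
        have hLpos : 1 ≤ ml (fr (app a b)) := ml_pos _
        rw [whitesF_fr_Mapp, ml_fr_Mapp]
        refine ⟨⟨?_, ?_⟩, ?_, ?_⟩
        · have p1 := satPath_lift_M hx pmin
          have p2 : SatPath (app M bb) (app bb bb) 1 :=
            .cons (cov_dup hbApp hbC) (.refl _)
          have := satPath_trans p1 p2
          rwa [Nat.add_comm] at this
        · intro n hn
          rcases satPath_Mapp_decomp hx hc.2 hn with ⟨y, heq, _⟩ | ⟨s, n1, n2, hne, p1, p2⟩
          · injection heq with h1 _
            exact absurd h1 (isApp_ne_M hbApp)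
          · have hsApp : IsApp s := mle_isApp hx (satPath_mle p1)
            have hsC : MClosed s := mle_closed (satPath_mle p1) hc.2
            obtain ⟨v', w', k1, k2, heq, hk, q1, q2⟩ := satPath_app_decomp hsApp hsC hsC p2
            injection heq with h1 h2
            subst h1; subst h2
            have := bmin _ (satPath_trans p1 q1)
            omega
        · have p0 : SatPath (app M (app a b)) (app (app a b) (app a b)) 1 :=
            .cons (cov_dup hx hc.2) (.refl _)
          have p1 := satPath_lift_left (app a b) hx hc.2 hc.2 pmax
          have p2 := satPath_lift_right bb hbApp hbC pmax
          have := satPath_trans p0 (satPath_trans p1 p2)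
          have e : 1 + (ml (fr (app a b)) - 1 + (ml (fr (app a b)) - 1)) =
              2 * ml (fr (app a b)) - 1 := by omega
          rwa [e] at this
        · intro n hn
          rcases satPath_Mapp_decomp hx hc.2 hn with ⟨y, heq, _⟩ | ⟨s, n1, n2, hne, p1, p2⟩
          · injection heq with h1 _
            exact absurd h1 (isApp_ne_M hbApp)
          · have hsApp : IsApp s := mle_isApp hx (satPath_mle p1)
            have hsC : MClosed s := mle_closed (satPath_mle p1) hc.2
            obtain ⟨v', w', k1, k2, heq, hk, q1, q2⟩ := satPath_app_decomp hsApp hsC hsC p2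
            injection heq with h1 h2
            subst h1; subst h2
            have b1 := bmax _ (satPath_trans p1 q1)
            obtain ⟨j, pj⟩ := mle_reach hc.2 (satPath_mle p1)
            have b2 := bmax _ (satPath_trans pj q2)
            omega
    | var i, hc, _ => exact absurd hc.1 id
    | app a b, hc, hg =>
      have hx : IsApp (app a b) := isApp_app a b
      obtain ⟨m1, m2, rfl, g1, g2⟩ := grt_app hx hg
      obtain ⟨⟨pmin1, bmin1⟩, pmax1, bmax1⟩ := ih1 m1 hc.1 g1
      obtain ⟨⟨pmin2, bmin2⟩, pmax2, bmax2⟩ := ih2 m2 hc.2 g2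
      have hm1App : IsApp m1 := mle_isApp hx g1.1
      have hm1C : MClosed m1 := mle_closed g1.1 hc.1
      have hL1 : 1 ≤ ml (fr (app a b)) := ml_pos _
      have hL2 : 1 ≤ ml (fr t2) := ml_pos _
      rw [whitesF_fr_app, ml_fr_app]
      refine ⟨⟨?_, ?_⟩, ?_, ?_⟩
      · exact satPath_trans (satPath_lift_left t2 hx hc.1 hc.2 pmin1)
          (satPath_lift_right m1 hm1App hm1C pmin2)
      · intro n hn
        obtain ⟨v', w', k1, k2, heq, hk, q1, q2⟩ := satPath_app_decomp hx hc.1 hc.2 hn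
        injection heq with h1 h2
        subst h1; subst h2
        have := bmin1 _ q1
        have := bmin2 _ q2
        omega
      · have := satPath_trans (satPath_lift_left t2 hx hc.1 hc.2 pmax1)
          (satPath_lift_right m1 hm1App hm1C pmax2)
        have e : ml (fr (app a b)) - 1 + (ml (fr t2) - 1) =
            ml (fr (app a b)) + ml (fr t2) - 1 - 1 := by omega
        rwa [e] at this
      · intro n hn
        obtain ⟨v', w', k1, k2, heq, hk, q1, q2⟩ := satPath_app_decomp hx hc.1 hc.2 hn
        injection heq with h1 h2
        subst h1; subst h2
        have := bmax1 _ q1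
        have := bmax2 _ q2
        omega


lemma satPath_toChain {a b : MTerm} {n : ℕ} (h : SatPath a b n) :
    ∃ c, SatChain a b c ∧ c.length = n + 1 := by
  induction h with
  | refl a => exact ⟨[a], ⟨List.isChain_singleton a, rfl, rfl⟩, rfl⟩
  | @cons a bb c k hc hp ih =>
    obtain ⟨cl, ⟨h1, h2, h3⟩, h4⟩ := ih
    cases cl with
    | nil => simp at h2
    | cons x xs =>
      simp only [List.head?_cons, Option.some_inj] at h2
      have hax : MCovBy a x := by rw [h2]; exact hc
      refine ⟨a :: x :: xs, ⟨?_, rfl, ?_⟩, by simpa using h4⟩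
      · exact List.isChain_cons_cons.2 ⟨hax, h1⟩
      · rw [List.getLast?_cons_cons]; exact h3

lemma chain_toPath : ∀ (c : List MTerm) (a b : MTerm), SatChain a b c →
    SatPath a b (c.length - 1)
  | [], a, b, h => by simp [SatChain] at h
  | [x], a, b, h => by
    obtain ⟨h1, h2, h3⟩ := h
    simp only [List.head?_cons, Option.some_inj] at h2
    simp only [List.getLast?_singleton, Option.some_inj] at h3
    subst h2; subst h3
    exact .refl _
  | x :: y :: rest, a, b, h => by
    obtain ⟨h1, h2, h3⟩ := h
    simp only [List.head?_cons, Option.some_inj] at h2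
    subst h2
    simp only [List.Chain', List.isChain_cons_cons] at h1
    rw [List.getLast?_cons_cons] at h3
    have := chain_toPath (y :: rest) y b ⟨h1.2, rfl, h3⟩
    have e := SatPath.cons h1.1 this
    simpa using e


/-- for a closed term `t` with greatest element `m` of `P(t)`, the minimum
length (number of covering steps) of a saturated chain from `t` to `m` is the number of
white nodes of `fr t`, and the maximum number of elements of a saturated chain from `t`
to `m` is `ml (fr t)`. -/
theorem saturated_chain_extremal_lengths (t m : MTerm) (hc : MClosed t)
    (hm : MLe t m ∧ ∀ s, MLe t s → MLe s m) :
    IsLeast {k : ℕ | ∃ c : List MTerm, SatChain t m c ∧ c.length = k + 1}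
      (whitesF (fr t)) ∧
    IsGreatest {k : ℕ | ∃ c : List MTerm, SatChain t m c ∧ c.length = k}
      (ml (fr t)) := by
  obtain ⟨hm1, hm2⟩ := hm
  have hg : Grt t m := ⟨hm1, hm2⟩
  obtain ⟨⟨pmin, bmin⟩, pmax, bmax⟩ := main_sat t m hc hg
  have hL : 1 ≤ ml (fr t) := ml_pos _
  constructor
  · constructor
    · obtain ⟨c, hc', hl⟩ := satPath_toChain pmin
      exact ⟨c, hc', hl⟩
    · rintro k ⟨c, hc', hl⟩
      have hp := chain_toPath c t m hc'
      rw [hl, Nat.add_sub_cancel] at hp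
      exact bmin k hp
  · constructor
    · obtain ⟨c, hc', hl⟩ := satPath_toChain pmax
      refine ⟨c, hc', ?_⟩
      rw [hl]
      omega
    · rintro k ⟨c, hc', hl⟩
      have hp := chain_toPath c t m hc'
      have hk1 : 1 ≤ k := by
        cases c with
        | nil => simp [SatChain] at hc'
        | cons x xs => simp at hl; omega
      rw [hl] at hp
      have := bmax (k - 1) hp
      omega
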